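/- Square-integrable envelope for the score: for every y ∈ ℝ, (f_G′(y)/f_G(y))² ≤ 2(y² + c²)/σ⁴. This bound holds uniformly over all Borel probability measures G supported in [-c, c]. -/

import Mathlib

open MeasureTheory Set

/-- The standard normal density `φ(z) = (2π)^{-1/2} e^{-z²/2}`. -/
noncomputable def stdNormalPDF (z : ℝ) : ℝ := (Real.sqrt (2 * Real.pi))⁻¹ * Real.exp (-z ^ 2 / 2)

/-- The mixture (marginal) density `f_G(y) = (1/σ) ∫ φ((y−θ)/σ) dG(θ)`. -/
noncomputable def mixDens (σ : ℝ) (G : Measure ℝ) (y : ℝ) : ℝ :=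
  (1 / σ) * ∫ θ, stdNormalPDF ((y - θ) / σ) ∂G

/-!
Differentiating under the integral sign,
`f_G'(y) = (1/σ) ∫ ((θ - y)/σ²) φ((y - θ)/σ) dG(θ)`, and on the support of `G` the factor
`|θ - y|/σ²` is at most `(|y| + c)/σ²`. Hence `|f_G'(y)| ≤ (|y| + c)/σ² · f_G(y)`, and
`(|y| + c)² ≤ 2(y² + c²)`.
-/

lemma stdNormalPDF_nonneg (z : ℝ) : 0 ≤ stdNormalPDF z := by
  unfold stdNormalPDF
  positivity

lemma inv_sqrt_two_pi_le_one : (Real.sqrt (2 * Real.pi))⁻¹ ≤ 1 :=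
  inv_le_one_of_one_le₀ <| Real.one_le_sqrt.2 (by linarith [Real.pi_gt_three])

lemma stdNormalPDF_le_one (z : ℝ) : stdNormalPDF z ≤ 1 :=
  mul_le_one₀ inv_sqrt_two_pi_le_one (Real.exp_pos _).le
    (Real.exp_le_one_iff.2 (by nlinarith [sq_nonneg z]))

lemma abs_mul_stdNormalPDF_le_one (z : ℝ) : |z| * stdNormalPDF z ≤ 1 := by
  have hexp : |z| * Real.exp (-z ^ 2 / 2) ≤ 1 := by
    -- `|z| ≤ 1 + z²/2 ≤ exp (z²/2)`
    have h := Real.add_one_le_exp (z ^ 2 / 2)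
    rw [neg_div, Real.exp_neg, ← div_eq_mul_inv, div_le_one (Real.exp_pos _)]
    nlinarith [sq_abs z, sq_nonneg (|z| - 1)]
  calc |z| * stdNormalPDF z
      = (Real.sqrt (2 * Real.pi))⁻¹ * (|z| * Real.exp (-z ^ 2 / 2)) := by
        unfold stdNormalPDF; ring
    _ ≤ 1 * 1 := mul_le_mul inv_sqrt_two_pi_le_one hexp (by positivity) zero_le_one
    _ = 1 := one_mul 1

@[fun_prop]
lemma continuous_stdNormalPDF : Continuous stdNormalPDF := by
  unfold stdNormalPDF
  fun_prop

lemma hasDerivAt_stdNormalPDF (z : ℝ) : HasDerivAt stdNormalPDF (-z * stdNormalPDF z) z := by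
  have h : HasDerivAt (fun z : ℝ => -z ^ 2 / 2) (-z) z := by
    simpa using ((hasDerivAt_pow 2 z).neg.div_const 2).congr_deriv (by push_cast; ring)
  have := h.exp.const_mul (Real.sqrt (2 * Real.pi))⁻¹
  unfold stdNormalPDF
  exact this.congr_deriv (by ring)

section Mixture

variable {σ : ℝ} {G : Measure ℝ}

lemma integrable_stdNormalPDF_comp [IsFiniteMeasure G] {f : ℝ → ℝ} (hf : Continuous f) :
    Integrable (fun θ => stdNormalPDF (f θ)) G :=
  Integrable.of_bound (continuous_stdNormalPDF.comp hf).aestronglyMeasurable 1 <|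
    .of_forall fun θ => by
      rw [Real.norm_eq_abs, abs_of_nonneg (stdNormalPDF_nonneg _)]
      exact stdNormalPDF_le_one _

lemma mixDens_nonneg (hσ : 0 ≤ σ) (y : ℝ) : 0 ≤ mixDens σ G y :=
  mul_nonneg (one_div_nonneg.2 hσ) (integral_nonneg fun _ => stdNormalPDF_nonneg _)

lemma hasDerivAt_mixDens [IsFiniteMeasure G] (y : ℝ) :
    HasDerivAt (mixDens σ G)
      ((1 / σ) * ∫ θ, -((y - θ) / σ) * stdNormalPDF ((y - θ) / σ) * (1 / σ) ∂G) y := by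
  have hdiff (x θ : ℝ) : HasDerivAt (fun x => stdNormalPDF ((x - θ) / σ))
      (-((x - θ) / σ) * stdNormalPDF ((x - θ) / σ) * (1 / σ)) x :=
    (hasDerivAt_stdNormalPDF _).comp x (((hasDerivAt_id x).sub_const θ).div_const σ)
  have hbound (x θ : ℝ) :
      ‖-((x - θ) / σ) * stdNormalPDF ((x - θ) / σ) * (1 / σ)‖ ≤ |1 / σ| := by
    rw [Real.norm_eq_abs, abs_mul, abs_mul, abs_neg, abs_of_nonneg (stdNormalPDF_nonneg _)]
    exact mul_le_of_le_one_left (abs_nonneg _) (abs_mul_stdNormalPDF_le_one _)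
  refine HasDerivAt.const_mul (1 / σ) ?_
  refine (hasDerivAt_integral_of_dominated_loc_of_deriv_le (bound := fun _ => |1 / σ|)
    Filter.univ_mem (.of_forall fun x => ?_) (integrable_stdNormalPDF_comp (by fun_prop)) ?_
    (.of_forall fun θ x _ => hbound x θ) (integrable_const _)
    (.of_forall fun θ x _ => hdiff x θ)).2
  · exact (integrable_stdNormalPDF_comp (by fun_prop)).aestronglyMeasurable
  · exact Continuous.aestronglyMeasurable (by fun_prop)

lemma abs_deriv_mixDens_le [IsFiniteMeasure G] (hσ : 0 < σ) {y R : ℝ}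
    (hR : ∀ᵐ θ ∂G, |y - θ| ≤ R) :
    |deriv (mixDens σ G) y| ≤ R / σ ^ 2 * mixDens σ G y := by
  have hpointwise : ∀ᵐ θ ∂G,
      ‖-((y - θ) / σ) * stdNormalPDF ((y - θ) / σ) * (1 / σ)‖
        ≤ R / σ ^ 2 * stdNormalPDF ((y - θ) / σ) := by
    filter_upwards [hR] with θ hθ
    have hφ := stdNormalPDF_nonneg ((y - θ) / σ)
    calc ‖-((y - θ) / σ) * stdNormalPDF ((y - θ) / σ) * (1 / σ)‖
        = |y - θ| / σ ^ 2 * stdNormalPDF ((y - θ) / σ) := by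
          rw [Real.norm_eq_abs, abs_mul, abs_mul, abs_neg, abs_div, abs_of_pos hσ,
            abs_of_nonneg hφ, abs_of_pos (one_div_pos.2 hσ)]
          ring
      _ ≤ R / σ ^ 2 * stdNormalPDF ((y - θ) / σ) := by gcongr
  have hint := norm_integral_le_of_norm_le
    ((integrable_stdNormalPDF_comp (f := fun θ => (y - θ) / σ) (by fun_prop)).const_mul
      (R / σ ^ 2)) hpointwise
  rw [integral_const_mul, Real.norm_eq_abs] at hint
  rw [(hasDerivAt_mixDens y).deriv, abs_mul, abs_of_pos (one_div_pos.2 hσ), mixDens,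
    mul_left_comm (R / σ ^ 2)]
  exact mul_le_mul_of_nonneg_left hint (one_div_nonneg.2 hσ.le)

end Mixture

lemma sq_div_le_sq_of_abs_le_mul {a b K : ℝ} (hb : 0 ≤ b) (h : |a| ≤ K * b) :
    (a / b) ^ 2 ≤ K ^ 2 := by
  rcases hb.eq_or_lt with rfl | hb
  · simp [sq_nonneg]
  · rw [← sq_abs, abs_div, abs_of_pos hb]
    exact pow_le_pow_left₀ (by positivity) ((div_le_iff₀ hb).2 h) 2

theorem score_envelope_general (σ c : ℝ) (hσ : 0 < σ) :
    ∀ (G : Measure ℝ), IsProbabilityMeasure G → (∀ᵐ θ ∂G, θ ∈ Icc (-c) c) →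
      ∀ y : ℝ, (deriv (mixDens σ G) y / mixDens σ G y) ^ 2 ≤ 2 * (y ^ 2 + c ^ 2) / σ ^ 4 := by
  intro G _ hsupp y
  have hR : ∀ᵐ θ ∂G, |y - θ| ≤ |y| + c := by
    filter_upwards [hsupp] with θ hθ
    linarith [abs_sub y θ, abs_le.2 hθ]
  calc (deriv (mixDens σ G) y / mixDens σ G y) ^ 2
      ≤ ((|y| + c) / σ ^ 2) ^ 2 :=
        sq_div_le_sq_of_abs_le_mul (mixDens_nonneg hσ.le y) (abs_deriv_mixDens_le hσ hR)
    _ = (|y| + c) ^ 2 / σ ^ 4 := by ring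
    _ ≤ 2 * (y ^ 2 + c ^ 2) / σ ^ 4 := by
        gcongr
        simpa only [sq_abs] using add_sq_le (a := |y|) (b := c)

/-- **Square-integrable envelope for the score**: uniformly over all Borel probability
measures `G` supported in `[-c, c]`, `(f_G′(y)/f_G(y))² ≤ 2(y² + c²)/σ⁴` for every `y`. -/
theorem score_envelope (σ c : ℝ) (hσ : 0 < σ) (hc : 0 < c) :
    ∀ (G : Measure ℝ), IsProbabilityMeasure G → (∀ᵐ θ ∂G, θ ∈ Icc (-c) c) →
      ∀ y : ℝ, (deriv (mixDens σ G) y / mixDens σ G y) ^ 2 ≤ 2 * (y ^ 2 + c ^ 2) / σ ^ 4 :=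
  score_envelope_general σ c hσ
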